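/- arXiv:2410.19870 — 6 statements merged into one kernel-verified Lean document; each statement's English description precedes it below -/
import Mathlib

section
/- Let d be a natural number and let T : (Fin d → ℝ) → (Fin d → ℝ) be a triangular map such that for every index i and every point x, the section t ↦ (T (Function.update x i t)) i is strictly increasing and surjective onto ℝ. Then T is bijective. -/
/-- A map `T : (Fin d → ℝ) → (Fin d → ℝ)` is triangular if its `i`-th component
depends only on coordinates with index at most `i`. -/
def IsTriangular {d : ℕ} (T : (Fin d → ℝ) → (Fin d → ℝ)) : Prop :=
  ∀ i : Fin d, ∀ x y : Fin d → ℝ, (∀ j : Fin d, j ≤ i → x j = y j) → T x i = T y i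

noncomputable def solveAux {d : ℕ} (T : (Fin d → ℝ) → (Fin d → ℝ))
    (hsurj : ∀ (i : Fin d) (x : Fin d → ℝ),
      Function.Surjective (fun t : ℝ => T (Function.update x i t) i))
    (y : Fin d → ℝ) : ℕ → (Fin d → ℝ)
  | 0 => fun _ => 0
  | (n+1) =>
    if h : n < d then
      Function.update (solveAux T hsurj y n) ⟨n, h⟩
        (Classical.choose (hsurj ⟨n, h⟩ (solveAux T hsurj y n) (y ⟨n, h⟩)))
    else solveAux T hsurj y n

lemma solveAux_succ {d : ℕ} (T : (Fin d → ℝ) → (Fin d → ℝ))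
    (hsurj : ∀ (i : Fin d) (x : Fin d → ℝ),
      Function.Surjective (fun t : ℝ => T (Function.update x i t) i))
    (y : Fin d → ℝ) (n : ℕ) (h : n < d) :
    solveAux T hsurj y (n+1) =
      Function.update (solveAux T hsurj y n) ⟨n, h⟩
        (Classical.choose (hsurj ⟨n, h⟩ (solveAux T hsurj y n) (y ⟨n, h⟩))) := by
  rw [solveAux, dif_pos h]

lemma solveAux_stable {d : ℕ} (T : (Fin d → ℝ) → (Fin d → ℝ))
    (hsurj : ∀ (i : Fin d) (x : Fin d → ℝ),
      Function.Surjective (fun t : ℝ => T (Function.update x i t) i))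
    (y : Fin d → ℝ) (m n : ℕ) (hmn : m ≤ n) (j : Fin d) (hj : j.1 < m) :
    solveAux T hsurj y n j = solveAux T hsurj y m j := by
  induction n with
  | zero => omega
  | succ n ih =>
    rcases Nat.eq_or_lt_of_le hmn with h | h
    · subst h; rfl
    · have hmn' : m ≤ n := Nat.lt_succ_iff.mp h
      rw [← ih hmn']
      by_cases hd : n < d
      · rw [solveAux_succ T hsurj y n hd, Function.update_of_ne]
        intro hje
        have : j.1 = n := by rw [hje]
        omega
      · rw [solveAux, dif_neg hd]

theorem triangular_strictMono_surjective_bijective {d : ℕ}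
    (T : (Fin d → ℝ) → (Fin d → ℝ)) (hT : IsTriangular T)
    (hmono : ∀ (i : Fin d) (x : Fin d → ℝ),
      StrictMono (fun t : ℝ => T (Function.update x i t) i))
    (hsurj : ∀ (i : Fin d) (x : Fin d → ℝ),
      Function.Surjective (fun t : ℝ => T (Function.update x i t) i)) :
    Function.Bijective T := by
  constructor
  · -- injectivity
    intro x y hxy
    funext i
    obtain ⟨n, hn⟩ := i
    induction n using Nat.strong_induction_on with
    | _ n IH =>
      set i : Fin d := ⟨n, hn⟩ with hi
      have hagree : ∀ j : Fin d, j < i → x j = y j := by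
        intro j hj
        have := IH j.1 hj (j.2)
        simpa using this
      have h1 : T x i = T (Function.update x i (x i)) i := by
        rw [Function.update_eq_self]
      have h2 : T y i = T (Function.update x i (y i)) i := by
        apply hT
        intro j hj
        rcases eq_or_lt_of_le hj with h | h
        · subst h; simp
        · rw [Function.update_of_ne (ne_of_lt h)]
          exact (hagree j h).symm
      have : T (Function.update x i (x i)) i = T (Function.update x i (y i)) i := by
        rw [← h1, ← h2, congrFun hxy i]
      exact (hmono i x).injective this
  · -- surjectivity
    intro y
    refine ⟨solveAux T hsurj y d, ?_⟩
    funext i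
    obtain ⟨n, hn⟩ := i
    set i : Fin d := ⟨n, hn⟩ with hi
    set P := solveAux T hsurj y with hP
    have hspec := Classical.choose_spec (hsurj i (P n) (y i))
    have hupd : Function.update (P n) i
        (Classical.choose (hsurj i (P n) (y i))) = P (n + 1) := by
      rw [hP, solveAux_succ T hsurj y n hn]
    have key : T (P (n + 1)) i = y i := by
      rw [← hupd]; exact hspec
    have hstep : T (P d) i = T (P (n + 1)) i := by
      apply hT
      intro j hj
      have hj1 : j.1 < n + 1 := Nat.lt_succ_of_le hj
      show P d j = P (n+1) j
      rw [hP, solveAux_stable T hsurj y (n+1) d hn j hj1]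
    show T (P d) i = y i
    rw [hstep, key]
end

section
/- Let d be a natural number and let T : (Fin d → ℝ) → (Fin d → ℝ) be a triangular map such that for every index i and every point x, the section t ↦ (T (Function.update x i t)) i is strictly increasing and surjective onto ℝ. Then the inverse map S of T (which exists by bijectivity) is also triangular, and for every index i and every point x the section t ↦ (S (Function.update x i t)) i is strictly increasing and surjective onto ℝ. -/
/-- Auxiliary sequence used to build a preimage coordinate by coordinate. -/
private def seqX {d : ℕ} (c : Fin d → (Fin d → ℝ) → ℝ) : ℕ → (Fin d → ℝ)
  | 0 => fun _ => 0
  | n + 1 =>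
      if h : n < d then
        Function.update (seqX c n) ⟨n, h⟩ (c ⟨n, h⟩ (seqX c n))
      else seqX c n

theorem inverse_of_TMI_is_TMI {d : ℕ}
    (T : (Fin d → ℝ) → (Fin d → ℝ)) (hT : IsTriangular T)
    (hmono : ∀ (i : Fin d) (x : Fin d → ℝ),
      StrictMono (fun t : ℝ => T (Function.update x i t) i))
    (hsurj : ∀ (i : Fin d) (x : Fin d → ℝ),
      Function.Surjective (fun t : ℝ => T (Function.update x i t) i)) :
    ∃ S : (Fin d → ℝ) → (Fin d → ℝ),
      Function.LeftInverse S T ∧ Function.RightInverse S T ∧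
      IsTriangular S ∧
      (∀ (i : Fin d) (x : Fin d → ℝ),
        StrictMono (fun t : ℝ => S (Function.update x i t) i)) ∧
      (∀ (i : Fin d) (x : Fin d → ℝ),
        Function.Surjective (fun t : ℝ => S (Function.update x i t) i)) := by
  classical
  -- Key lemma: if T-values agree up to i, then the points agree at i.
  have L : ∀ x x' : Fin d → ℝ, ∀ i : Fin d,
      (∀ j : Fin d, j ≤ i → T x j = T x' j) → x i = x' i := by
    intro x x'
    have H : ∀ n : ℕ, ∀ i : Fin d, i.val = n →
        (∀ j : Fin d, j ≤ i → T x j = T x' j) → x i = x' i := by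
      intro n
      induction n using Nat.strong_induction_on with
      | _ n ih =>
        intro i hi h
        have hx' : T x' i = T (Function.update x i (x' i)) i := by
          apply hT
          intro k hk
          rcases lt_or_eq_of_le hk with hk' | hk'
          · rw [Function.update_of_ne (Fin.ne_of_lt hk')]
            exact (ih k.val (by have : k.val < i.val := hk'; omega) k rfl
              (fun j hj => h j (hj.trans (le_of_lt hk')))).symm
          · subst hk'; simp
        have h1 : T (Function.update x i (x i)) i = T (Function.update x i (x' i)) i := by
          rw [Function.update_eq_self]
          exact (h i le_rfl).trans hx'
        exact (hmono i x).injective h1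
    intro i
    exact H i.val i rfl
  -- Injectivity of T
  have hTinj : Function.Injective T := by
    intro x x' h
    funext i
    exact L x x' i (fun j _ => congrFun h j)
  -- Surjectivity of T
  have hTsurj : Function.Surjective T := by
    intro y
    choose c hc using fun (i : Fin d) (x : Fin d → ℝ) => hsurj i x (y i)
    have hstable : ∀ m n : ℕ, m ≤ n → ∀ j : Fin d, j.val < m → seqX c n j = seqX c m j := by
      intro m n hmn
      induction n with
      | zero =>
        intro j hj
        omega
      | succ n ihn =>
        intro j hj
        rcases Nat.lt_or_ge m (n + 1) with h | h
        · have hmn' : m ≤ n := by omega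
          have h1 := ihn hmn' j hj
          have h2 : seqX c (n + 1) j = seqX c n j := by
            show (if hnd : n < d then
                Function.update (seqX c n) ⟨n, hnd⟩ (c ⟨n, hnd⟩ (seqX c n))
              else seqX c n) j = seqX c n j
            split
            · apply Function.update_of_ne
              intro hEq
              have : j.val = n := by rw [hEq]
              omega
            · rfl
          rw [h2, h1]
        · have : m = n + 1 := le_antisymm hmn h
          subst this; rfl
    refine ⟨seqX c d, ?_⟩
    funext i
    have h1 : T (seqX c d) i = T (seqX c (i.val + 1)) i := by
      apply hT
      intro j hj
      exact hstable (i.val + 1) d (by omega) j (by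
        have : j.val ≤ i.val := hj
        omega)
    have h2 : seqX c (i.val + 1) = Function.update (seqX c i.val) i (c i (seqX c i.val)) := by
      show (if h : i.val < d then
          Function.update (seqX c i.val) ⟨i.val, h⟩ (c ⟨i.val, h⟩ (seqX c i.val))
        else seqX c i.val) = _
      rw [dif_pos i.isLt]

    rw [h1, h2]
    exact hc i (seqX c i.val)
  -- The inverse S
  set S := Function.invFun T with hS
  have hleft : Function.LeftInverse S T := Function.leftInverse_invFun hTinj
  have hright : Function.RightInverse S T := Function.rightInverse_invFun hTsurj
  refine ⟨S, hleft, hright, ?_, ?_, ?_⟩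
  · -- S is triangular
    intro i y y' h
    apply L (S y) (S y') i
    intro j hj
    rw [hright y, hright y']
    exact h j hj
  · -- sections of S are strictly increasing
    intro i x t t' htt'
    show S (Function.update x i t) i < S (Function.update x i t') i
    set u := S (Function.update x i t) with hu0
    set u' := S (Function.update x i t') with hu'0
    have hu : T u = Function.update x i t := hright _
    have hu' : T u' = Function.update x i t' := hright _
    have hbelow : ∀ j : Fin d, j < i → u j = u' j := by
      intro j hj
      apply L u u' j
      intro k hk
      have hki : k ≠ i := Fin.ne_of_lt (lt_of_le_of_lt hk hj)
      rw [hu, hu', Function.update_of_ne hki, Function.update_of_ne hki]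
    have h1 : T u i = t := by rw [hu]; simp
    have h2 : T u' i = T (Function.update u i (u' i)) i := by
      apply hT
      intro k hk
      rcases lt_or_eq_of_le hk with hk' | hk'
      · rw [Function.update_of_ne (Fin.ne_of_lt hk')]
        exact (hbelow k hk').symm
      · subst hk'; simp
    have h3 : T (Function.update u i (u i)) i < T (Function.update u i (u' i)) i := by
      rw [Function.update_eq_self, h1, ← h2, hu']
      simpa using htt'
    exact (hmono i u).lt_iff_lt.mp h3
  · -- sections of S are surjective
    intro i x s
    set z := S (Function.update x i 0) with hz0
    set w := Function.update z i s with hw0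
    refine ⟨T w i, ?_⟩
    show S (Function.update x i (T w i)) i = s
    set v := S (Function.update x i (T w i)) with hv0
    have hvT : T v = Function.update x i (T w i) := hright _
    have hzT : T z = Function.update x i 0 := hright _
    have hvw : v i = w i := by
      apply L v w i
      intro j hj
      rcases lt_or_eq_of_le hj with hj' | hj'
      · have hji : j ≠ i := Fin.ne_of_lt hj'
        have e1 : T v j = x j := by rw [hvT, Function.update_of_ne hji]
        have e2 : T w j = T z j := by
          apply hT
          intro k hk
          rw [hw0, Function.update_of_ne (Fin.ne_of_lt (lt_of_le_of_lt hk hj'))]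
        have e3 : T z j = x j := by rw [hzT, Function.update_of_ne hji]
        rw [e1, e2, e3]
      · subst hj'
        rw [hvT]; simp
    rw [hvw, hw0]; simp
end

section
/- Let d be a natural number, let T : (Fin d → ℝ) → (Fin d → ℝ) be a triangular map, and suppose T is differentiable at a point x, with Jacobian matrix J(x) i j = ((fderiv ℝ T x) (Pi.single j 1)) i. Then det J(x) = ∏ i, J(x) i i, i.e., the Jacobian determinant equals the product of the diagonal partial derivatives. -/
theorem jacobian_det_of_triangular_eq_prod_diag {d : ℕ}
    (T : (Fin d → ℝ) → (Fin d → ℝ)) (hT : IsTriangular T)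
    (x : Fin d → ℝ) (hdiff : DifferentiableAt ℝ T x)
    (J : Matrix (Fin d) (Fin d) ℝ)
    (hJ : ∀ i j : Fin d, J i j = ((fderiv ℝ T x) (Pi.single j 1)) i) :
    J.det = ∏ i : Fin d, J i i := by
  apply Matrix.det_of_lowerTriangular
  intro i j hij
  rw [hJ]
  set v : Fin d → ℝ := Pi.single j 1 with hv
  have hline : HasDerivAt (fun t : ℝ => T (x + t • v)) (fderiv ℝ T x v) 0 := by
    have h1 : HasDerivAt (fun t : ℝ => x + t • v) v 0 := by
      simpa using ((hasDerivAt_id (0:ℝ)).smul_const v).const_add x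
    have h2 : HasFDerivAt T (fderiv ℝ T x) (x + (0:ℝ) • v) := by
      simpa using hdiff.hasFDerivAt
    exact h2.comp_hasDerivAt 0 h1
  have hcomp : HasDerivAt (fun t : ℝ => T (x + t • v) i) ((fderiv ℝ T x v) i) 0 :=
    (hasDerivAt_pi.mp hline) i
  have hconst : (fun t : ℝ => T (x + t • v) i) = fun _ => T x i := by
    funext t
    apply hT i
    intro k hk
    have hkj : k ≠ j := fun h => absurd (h ▸ hk) (not_le.mpr hij)
    simp [hv, Pi.single_eq_of_ne hkj]
  have hzero : HasDerivAt (fun t : ℝ => T (x + t • v) i) 0 0 := by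
    rw [hconst]; exact hasDerivAt_const 0 _
  exact hcomp.unique hzero
end

section
/- Let d be a natural number and let T : (Fin d → ℝ) → (Fin d → ℝ) be a triangular map such that for every index i and every point x the section t ↦ (T (Function.update x i t)) i is strictly increasing (i.e., T is a TMI map). If T is differentiable at a point x with Jacobian matrix J(x) i j = ((fderiv ℝ T x) (Pi.single j 1)) i, then J(x) i i ≥ 0 for every i, and consequently det J(x) ≥ 0. -/
/-- If a monotone real function has a derivative at a point, the derivative is nonnegative. -/
lemma monotone_hasDerivAt_nonneg {f : ℝ → ℝ} {c t : ℝ} (hf : Monotone f)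
    (h : HasDerivAt f c t) : 0 ≤ c := by
  have h' := (hasDerivAt_iff_tendsto_slope.1 h).mono_left
    (nhdsWithin_mono t (by intro y hy; exact ne_of_gt hy : Set.Ioi t ⊆ {t}ᶜ))
  refine ge_of_tendsto h' ?_
  filter_upwards [self_mem_nhdsWithin] with y hy
  have : (0:ℝ) < y - t := sub_pos.2 hy
  have : 0 ≤ (f y - f t) / (y - t) :=
    div_nonneg (sub_nonneg.2 (hf (le_of_lt hy))) this.le
  simpa [slope_def_field, div_eq_inv_mul] using this

theorem jacobian_of_TMI_nonneg_diag_and_det {d : ℕ}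
    (T : (Fin d → ℝ) → (Fin d → ℝ)) (hT : IsTriangular T)
    (hmono : ∀ (i : Fin d) (x : Fin d → ℝ),
      StrictMono (fun t : ℝ => T (Function.update x i t) i))
    (x : Fin d → ℝ) (hdiff : DifferentiableAt ℝ T x)
    (J : Matrix (Fin d) (Fin d) ℝ)
    (hJ : ∀ i j : Fin d, J i j = ((fderiv ℝ T x) (Pi.single j 1)) i) :
    (∀ i : Fin d, 0 ≤ J i i) ∧ 0 ≤ J.det := by
  -- derivative along a coordinate direction
  have hline : ∀ j : Fin d, HasDerivAt (fun t : ℝ => T (x + t • (Pi.single j 1 : Fin d → ℝ)))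
      ((fderiv ℝ T x) (Pi.single j 1)) 0 := by
    intro j
    have hc : HasDerivAt (fun t : ℝ => x + t • (Pi.single j 1 : Fin d → ℝ)) (Pi.single j 1) 0 := by
      simpa using ((hasDerivAt_id (0:ℝ)).smul_const ((Pi.single j 1 : Fin d → ℝ))).const_add x
    have h0 : HasFDerivAt T (fderiv ℝ T x) (x + (0:ℝ) • (Pi.single j 1 : Fin d → ℝ)) := by
      simpa using hdiff.hasFDerivAt
    exact h0.comp_hasDerivAt 0 hc
  have hcomp : ∀ i j : Fin d, HasDerivAt (fun t : ℝ => T (x + t • (Pi.single j 1 : Fin d → ℝ)) i)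
      (((fderiv ℝ T x) (Pi.single j 1)) i) 0 := by
    intro i j
    exact (hasDerivAt_pi.1 (hline j)) i
  have hdiag : ∀ i : Fin d, 0 ≤ J i i := by
    intro i
    have hfun : ∀ t : ℝ, x + t • (Pi.single i 1 : Fin d → ℝ) = Function.update x i (x i + t) := by
      intro t; funext k
      by_cases hk : k = i
      · subst hk; simp
      · simp [Pi.single_apply, Function.update_apply, hk]
    have hmono' : Monotone (fun t : ℝ => T (x + t • (Pi.single i 1 : Fin d → ℝ)) i) := by
      have : StrictMono (fun t : ℝ => T (Function.update x i (x i + t)) i) :=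
        (hmono i x).comp (fun a b hab => by simpa using hab : StrictMono fun t : ℝ => x i + t)
      intro a b hab
      have h2 := this.monotone hab
      simpa [hfun a, hfun b] using h2
    rw [hJ i i]
    exact monotone_hasDerivAt_nonneg hmono' (hcomp i i)
  refine ⟨hdiag, ?_⟩
  have hzero : ∀ i j : Fin d, i < j → J i j = 0 := by
    intro i j hij
    have hconst : ∀ t : ℝ, T (x + t • (Pi.single j 1 : Fin d → ℝ)) i = T x i := by
      intro t
      refine hT i _ _ fun k hk => ?_
      have hkj : k ≠ j := fun h => absurd (h ▸ hk) (not_le.2 hij)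
      simp [Pi.single_apply, hkj]
    have h1 : HasDerivAt (fun t : ℝ => T (x + t • (Pi.single j 1 : Fin d → ℝ)) i) 0 0 := by
      have : HasDerivAt (fun _ : ℝ => T x i) 0 0 := hasDerivAt_const _ _
      exact this.congr_of_eventuallyEq (Filter.Eventually.of_forall hconst)
    rw [hJ i j]
    exact ((hcomp i j).unique h1)
  have : J.BlockTriangular OrderDual.toDual := by
    intro i j h
    exact hzero i j h
  rw [Matrix.det_of_lowerTriangular J this]
  exact Finset.prod_nonneg fun i _ => hdiag i
end

section
/- Let f : ℝ × ℝ → ℝ be continuously differentiable with ∂f/∂u (p, u) > 0 for all (p, u), and suppose that for every p the function u ↦ f (p, u) is surjective onto ℝ. Let g : ℝ × ℝ → ℝ be the function satisfying f (p, g (p, x)) = x for all p, x. Then ∂g/∂p (p, x) = 0 for all (p, x) if and only if ∂f/∂p (p, u) = 0 for all (p, u). -/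
open ContinuousLinearMap

/-- Any continuous linear map `ℝ × ℝ →L[ℝ] ℝ` is determined by its values on the
standard basis vectors. -/
lemma clm_decomp (φ : ℝ × ℝ →L[ℝ] ℝ) (z : ℝ × ℝ) :
    φ z = z.1 * φ (1, 0) + z.2 * φ (0, 1) := by
  have hz : z = z.1 • ((1:ℝ), (0:ℝ)) + z.2 • ((0:ℝ), (1:ℝ)) := by
    ext <;> simp
  nth_rewrite 1 [hz]
  rw [map_add, map_smul, map_smul, smul_eq_mul, smul_eq_mul]

theorem inverse_grad_vanishes_iff_root
    (f : ℝ × ℝ → ℝ) (hf : ContDiff ℝ 1 f)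
    (hpos : ∀ p u : ℝ, 0 < fderiv ℝ f (p, u) (0, 1))
    (hsurj : ∀ p : ℝ, Function.Surjective (fun u : ℝ => f (p, u)))
    (g : ℝ × ℝ → ℝ) (hg : ∀ p x : ℝ, f (p, g (p, x)) = x) :
    (∀ p x : ℝ, fderiv ℝ g (p, x) (1, 0) = 0) ↔
      (∀ p u : ℝ, fderiv ℝ f (p, u) (1, 0) = 0) := by
  have hdiff : Differentiable ℝ f := hf.differentiable one_ne_zero
  -- derivative of the partial map u ↦ f (p, u)
  have hderivAt : ∀ p u : ℝ,
      HasDerivAt (fun v : ℝ => f (p, v)) (fderiv ℝ f (p, u) (0, 1)) u := by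
    intro p u
    have h2 : HasDerivAt (fun v : ℝ => ((p : ℝ), v)) ((0 : ℝ), (1 : ℝ)) u :=
      (hasDerivAt_const u p).prodMk (hasDerivAt_id u)
    exact (hdiff (p, u)).hasFDerivAt.comp_hasDerivAt u h2
  -- injectivity of the partial map
  have hinj : ∀ p : ℝ, Function.Injective (fun u : ℝ => f (p, u)) := by
    intro p
    have hsm : StrictMono (fun u : ℝ => f (p, u)) := by
      apply strictMono_of_deriv_pos
      intro u
      rw [(hderivAt p u).deriv]
      exact hpos p u
    exact hsm.injective
  have hgu : ∀ p u : ℝ, g (p, f (p, u)) = u := by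
    intro p u
    exact hinj p (by simpa using hg p (f (p, u)))
  -- key formula: ∂g/∂p = - ∂f/∂p / ∂f/∂u
  have key : ∀ p x : ℝ, fderiv ℝ g (p, x) (1, 0) =
      -(fderiv ℝ f (p, g (p, x)) (1, 0)) / fderiv ℝ f (p, g (p, x)) (0, 1) := by
    intro p x
    set u := g (p, x) with hu
    set φ := fderiv ℝ f (p, u) with hφ
    set c := φ (1, 0) with hc
    set d := φ (0, 1) with hd
    have hdpos : 0 < d := hpos p u
    have hdne : d ≠ 0 := ne_of_gt hdpos
    -- the map F (q) = (q.1, f q) and its strict derivative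
    set F : ℝ × ℝ → ℝ × ℝ := fun q => (q.1, f q) with hF
    set L : ℝ × ℝ →L[ℝ] ℝ × ℝ := (fst ℝ ℝ ℝ).prod φ with hL
    set L' : ℝ × ℝ →L[ℝ] ℝ × ℝ :=
      (fst ℝ ℝ ℝ).prod (d⁻¹ • ((snd ℝ ℝ ℝ) - c • (fst ℝ ℝ ℝ))) with hL'
    have h₁ : Function.LeftInverse L' L := by
      intro z
      have hdec := clm_decomp φ z
      simp only [hL, hL', ContinuousLinearMap.prod_apply, coe_fst', coe_snd',
        ContinuousLinearMap.smul_apply, ContinuousLinearMap.sub_apply,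
        ContinuousLinearMap.coe_smul', Pi.smul_apply, smul_eq_mul]
      refine Prod.ext rfl ?_
      simp only [hdec]
      field_simp
      ring
    have h₂ : Function.RightInverse L' L := by
      intro z
      have hdec := clm_decomp φ (z.1, d⁻¹ * (z.2 - c * z.1))
      simp only [hL, hL', ContinuousLinearMap.prod_apply, coe_fst', coe_snd',
        ContinuousLinearMap.smul_apply, ContinuousLinearMap.sub_apply,
        ContinuousLinearMap.coe_smul', Pi.smul_apply, smul_eq_mul]
      refine Prod.ext rfl ?_
      rw [hdec]
      field_simp
      ring
    set e : (ℝ × ℝ) ≃L[ℝ] (ℝ × ℝ) := ContinuousLinearEquiv.equivOfInverse L L' h₁ h₂ with he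
    have hFstrict : HasStrictFDerivAt F (e : (ℝ × ℝ) →L[ℝ] (ℝ × ℝ)) (p, u) := by
      have : HasStrictFDerivAt F L (p, u) :=
        hasStrictFDerivAt_fst.prodMk ((hf.contDiffAt).hasStrictFDerivAt one_ne_zero)
      exact this
    -- the global inverse G
    set G : ℝ × ℝ → ℝ × ℝ := fun q => (q.1, g q) with hG
    have hGF : ∀ q : ℝ × ℝ, G (F q) = q := by
      intro q
      have : g (q.1, f (q.1, q.2)) = q.2 := hgu q.1 q.2
      simp only [hG, hF]
      exact Prod.ext rfl (by simpa using this)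
    have hGstrict : HasStrictFDerivAt G
        ((e.symm : (ℝ × ℝ) ≃L[ℝ] (ℝ × ℝ)) : (ℝ × ℝ) →L[ℝ] (ℝ × ℝ)) (F (p, u)) :=
      hFstrict.to_local_left_inverse (Filter.Eventually.of_forall hGF)
    have hFpu : F (p, u) = (p, x) := by
      simp only [hF]
      exact Prod.ext rfl (hg p x)
    rw [hFpu] at hGstrict
    -- g = snd ∘ G
    have hgderiv : HasFDerivAt g
        ((snd ℝ ℝ ℝ).comp ((e.symm : (ℝ × ℝ) ≃L[ℝ] (ℝ × ℝ)) : (ℝ × ℝ) →L[ℝ] (ℝ × ℝ))) (p, x) := by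
      have := (hasFDerivAt_snd (𝕜 := ℝ) (E := ℝ) (F := ℝ)).comp (p, x)
        hGstrict.hasFDerivAt
      exact this
    rw [hgderiv.fderiv]
    have hesymm : (e.symm : (ℝ × ℝ) →L[ℝ] (ℝ × ℝ)) = L' := by
      rw [he, ContinuousLinearEquiv.symm_equivOfInverse]
      rfl
    simp only [ContinuousLinearMap.comp_apply, hesymm, hL',
      ContinuousLinearMap.prod_apply, coe_fst', coe_snd',
      ContinuousLinearMap.smul_apply, ContinuousLinearMap.sub_apply,
      ContinuousLinearMap.coe_smul', Pi.smul_apply, smul_eq_mul]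
    field_simp
    ring
  constructor
  · intro h p u
    have hk := key p (f (p, u))
    rw [h p (f (p, u)), hgu p u] at hk
    have hdne : fderiv ℝ f (p, u) (0, 1) ≠ 0 := ne_of_gt (hpos p u)
    have := (div_eq_zero_iff.mp hk.symm).resolve_right hdne
    linarith [this]
  · intro h p x
    rw [key p x, h p (g (p, x)), neg_zero, zero_div]
end

section
/- Let d be a natural number and let T : (Fin d → ℝ) → (Fin d → ℝ) be differentiable everywhere, with Jacobian matrix J(x) i j = ((fderiv ℝ T x) (Pi.single j 1)) i. If J(x) i j = 0 for every point x whenever i < j (the Jacobian is everywhere lower triangular), then T is triangular: for each index i, T x i = T y i whenever x j = y j for all j ≤ i. -/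
theorem lower_triangular_jacobian_implies_triangular {d : ℕ}
    (T : (Fin d → ℝ) → (Fin d → ℝ)) (hdiff : Differentiable ℝ T)
    (hJ : ∀ (x : Fin d → ℝ) (i j : Fin d), i < j → ((fderiv ℝ T x) (Pi.single j 1)) i = 0) :
    ∀ i : Fin d, ∀ x y : Fin d → ℝ, (∀ j : Fin d, j ≤ i → x j = y j) → T x i = T y i := by
  intro i x y hxy
  set v : Fin d → ℝ := y - x with hv
  have hcomp : ∀ z : Fin d → ℝ, ((fderiv ℝ T z) v) i = 0 := by
    intro z
    have hvsum : v = ∑ j, v j • (Pi.single j 1 : Fin d → ℝ) := by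
      ext k
      simp [Finset.sum_apply, Pi.single_apply]
    rw [hvsum, map_sum, Finset.sum_apply]
    apply Finset.sum_eq_zero
    intro j _
    rw [(fderiv ℝ T z).map_smul]
    by_cases h : j ≤ i
    · have hvj : v j = 0 := by simp [hv, hxy j h]
      simp [hvj]
    · have hij : i < j := lt_of_not_ge h
      simp [hJ z i j hij]
  have hf : ∀ t : ℝ, HasDerivAt (fun t : ℝ => T (x + t • v) i) 0 t := by
    intro t
    have hp : HasDerivAt (fun t : ℝ => x + t • v) v t := by
      simpa using ((hasDerivAt_id t).smul_const v).const_add x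
    have hT := (hdiff (x + t • v)).hasFDerivAt.comp_hasDerivAt t hp
    have h2 := hasDerivAt_pi.1 hT i
    simpa [hcomp (x + t • v)] using h2
  have hconst := is_const_of_deriv_eq_zero
    (f := fun t : ℝ => T (x + t • v) i)
    (fun t => (hf t).differentiableAt) (fun t => (hf t).deriv)
  have := hconst 0 1
  simpa [hv] using this
end
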